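/- arXiv:2101.12377 — 11 statements merged into one kernel-verified Lean document; each statement's English description precedes it below -/
import Mathlib

section
/- Every nearly associative algebra is Lie-admissible: if (A, ·) is an algebra satisfying x·(y·z) = (z·x)·y for all x, y, z, then the commutator bracket [x,y] = x·y − y·x satisfies the Jacobi identity (and is skew-symmetric), so (A, [·,·]) is a Lie algebra. -/
theorem nearly_associative_lie_admissible_general
    {K A : Type*} [Field K] [AddCommGroup A] [Module K A]
    (mul : A →ₗ[K] A →ₗ[K] A)
    (hna : ∀ x y z : A, mul x (mul y z) = mul (mul z x) y) :
    (∀ x y : A, mul x y - mul y x = -(mul y x - mul x y)) ∧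
    (∀ x y z : A,
      (mul x (mul y z - mul z y) - mul (mul y z - mul z y) x) +
      (mul y (mul z x - mul x z) - mul (mul z x - mul x z) y) +
      (mul z (mul x y - mul y x) - mul (mul x y - mul y x) z) = 0) := by
  refine ⟨fun x y => (neg_sub _ _).symm, fun x y z => ?_⟩
  -- Rewriting every right-nested product `x (y z)` as `(z x) y` leaves twelve
  -- left-nested terms, which cancel in pairs.
  simp only [map_sub, LinearMap.sub_apply, hna]
  abel

/-- Every nearly associative algebra is Lie-admissible: the commutator bracket
is skew-symmetric and satisfies the Jacobi identity. -/
theorem nearly_associative_lie_admissible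
    {K A : Type*} [Field K] [CharZero K] [AddCommGroup A] [Module K A]
    (mul : A →ₗ[K] A →ₗ[K] A)
    (hna : ∀ x y z : A, mul x (mul y z) = mul (mul z x) y) :
    (∀ x y : A, mul x y - mul y x = -(mul y x - mul x y)) ∧
    (∀ x y z : A,
      (mul x (mul y z - mul z y) - mul (mul y z - mul z y) x) +
      (mul y (mul z x - mul x z) - mul (mul z x - mul x z) y) +
      (mul z (mul x y - mul y x) - mul (mul x y - mul y x) z) = 0) :=
  nearly_associative_lie_admissible_general mul hna
end

section
/- Let (A, ·) be a nearly associative algebra and let the 2-dimensional algebra with basis {e₁, e₂} be defined by e₁·e₁ = α e₂, e₁·e₂ = β e₁ = e₂·e₁, e₂·e₂ = β e₂ for scalars α, β. Then this algebra is nearly associative, i.e., it satisfies x·(y·z) = (z·x)·y for all x, y, z. -/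
theorem two_dim_class_one_nearly_associative_general
    {K A : Type*} [Field K] [AddCommGroup A] [Module K A]
    (mul : A →ₗ[K] A →ₗ[K] A) (e₁ e₂ : A) (α β : K)
    (hspan : ∀ x : A, ∃ c₁ c₂ : K, x = c₁ • e₁ + c₂ • e₂)
    (h11 : mul e₁ e₁ = α • e₂)
    (h12 : mul e₁ e₂ = β • e₁)
    (h21 : mul e₂ e₁ = β • e₁)
    (h22 : mul e₂ e₂ = β • e₂) :
    ∀ x y z : A, mul x (mul y z) = mul (mul z x) y := by
  intro x y z
  obtain ⟨a₁, a₂, rfl⟩ := hspan x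
  obtain ⟨b₁, b₂, rfl⟩ := hspan y
  obtain ⟨c₁, c₂, rfl⟩ := hspan z
  simp only [map_add, map_smul, LinearMap.add_apply, LinearMap.smul_apply,
    h11, h12, h21, h22]
  module

/-- The 2-dimensional algebra with e₁·e₁ = α e₂, e₁·e₂ = e₂·e₁ = β e₁,
e₂·e₂ = β e₂ is nearly associative. -/
theorem two_dim_class_one_nearly_associative
    {K A : Type*} [Field K] [CharZero K] [AddCommGroup A] [Module K A]
    (mul : A →ₗ[K] A →ₗ[K] A) (e₁ e₂ : A) (α β : K)
    (hspan : ∀ x : A, ∃ c₁ c₂ : K, x = c₁ • e₁ + c₂ • e₂)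
    (h11 : mul e₁ e₁ = α • e₂)
    (h12 : mul e₁ e₂ = β • e₁)
    (h21 : mul e₂ e₁ = β • e₁)
    (h22 : mul e₂ e₂ = β • e₂) :
    ∀ x y z : A, mul x (mul y z) = mul (mul z x) y :=
  two_dim_class_one_nearly_associative_general mul e₁ e₂ α β hspan h11 h12 h21 h22
end

section
/- The 2-dimensional algebra with basis {e₁, e₂} and product e₁·e₁ = α e₁ + β e₂, e₁·e₂ = e₂·e₁ = β e₁ + α e₂, e₂·e₂ = α e₁ + β e₂ (α, β scalars) is nearly associative, i.e., satisfies x·(y·z) = (z·x)·y for all x, y, z. -/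
/-!
In the basis `e₁ + e₂`, `e₁ - e₂` the product is diagonal, `(e₁ ± e₂)² = 2(α ± β)(e₁ ± e₂)` and
`(e₁ + e₂)(e₁ - e₂) = 0`, so the algebra is commutative and associative; both properties are
checked on the basis `e₁, e₂`. A commutative associative product satisfies
`x(yz) = (yz)x = y(zx) = (zx)y`.
-/

namespace LinearMap

variable {R A : Type*} [CommRing R] [AddCommGroup A] [Module R A] (mul : A →ₗ[R] A →ₗ[R] A)

theorem nearly_assoc_of_comm_of_assoc (hcomm : ∀ x y, mul x y = mul y x)
    (hassoc : ∀ x y z, mul (mul x y) z = mul x (mul y z)) (x y z : A) :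
    mul x (mul y z) = mul (mul z x) y :=
  calc mul x (mul y z) = mul (mul y z) x := hcomm _ _
    _ = mul y (mul z x) := hassoc _ _ _
    _ = mul (mul z x) y := hcomm _ _

variable {mul} {e₁ e₂ : A}

theorem comm_of_span_pair (hspan : ∀ x : A, ∃ c₁ c₂ : R, x = c₁ • e₁ + c₂ • e₂)
    (h : mul e₁ e₂ = mul e₂ e₁) (x y : A) : mul x y = mul y x := by
  obtain ⟨a₁, a₂, rfl⟩ := hspan x
  obtain ⟨b₁, b₂, rfl⟩ := hspan y
  simp only [map_add, map_smul, add_apply, smul_apply, h]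
  module

theorem assoc_of_span_pair {α β : R} (hspan : ∀ x : A, ∃ c₁ c₂ : R, x = c₁ • e₁ + c₂ • e₂)
    (h11 : mul e₁ e₁ = α • e₁ + β • e₂) (h12 : mul e₁ e₂ = β • e₁ + α • e₂)
    (h21 : mul e₂ e₁ = β • e₁ + α • e₂) (h22 : mul e₂ e₂ = α • e₁ + β • e₂) (x y z : A) :
    mul (mul x y) z = mul x (mul y z) := by
  obtain ⟨a₁, a₂, rfl⟩ := hspan x
  obtain ⟨b₁, b₂, rfl⟩ := hspan y
  obtain ⟨c₁, c₂, rfl⟩ := hspan z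
  simp only [map_add, map_smul, add_apply, smul_apply, h11, h12, h21, h22, smul_add, smul_smul]
  module

end LinearMap

theorem two_dim_class_two_nearly_associative_general
    {K A : Type*} [Field K] [AddCommGroup A] [Module K A]
    (mul : A →ₗ[K] A →ₗ[K] A) (e₁ e₂ : A) (α β : K)
    (hspan : ∀ x : A, ∃ c₁ c₂ : K, x = c₁ • e₁ + c₂ • e₂)
    (h11 : mul e₁ e₁ = α • e₁ + β • e₂)
    (h12 : mul e₁ e₂ = β • e₁ + α • e₂)
    (h21 : mul e₂ e₁ = β • e₁ + α • e₂)
    (h22 : mul e₂ e₂ = α • e₁ + β • e₂) :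
    ∀ x y z : A, mul x (mul y z) = mul (mul z x) y :=
  mul.nearly_assoc_of_comm_of_assoc (LinearMap.comm_of_span_pair hspan (h12.trans h21.symm))
    (LinearMap.assoc_of_span_pair hspan h11 h12 h21 h22)

/-- The 2-dimensional algebra with e₁·e₁ = α e₁ + β e₂, e₁·e₂ = e₂·e₁ = β e₁ + α e₂,
e₂·e₂ = α e₁ + β e₂ is nearly associative. -/
theorem two_dim_class_two_nearly_associative
    {K A : Type*} [Field K] [CharZero K] [AddCommGroup A] [Module K A]
    (mul : A →ₗ[K] A →ₗ[K] A) (e₁ e₂ : A) (α β : K)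
    (hspan : ∀ x : A, ∃ c₁ c₂ : K, x = c₁ • e₁ + c₂ • e₂)
    (h11 : mul e₁ e₁ = α • e₁ + β • e₂)
    (h12 : mul e₁ e₂ = β • e₁ + α • e₂)
    (h21 : mul e₂ e₁ = β • e₁ + α • e₂)
    (h22 : mul e₂ e₂ = α • e₁ + β • e₂) :
    ∀ x y z : A, mul x (mul y z) = mul (mul z x) y :=
  two_dim_class_two_nearly_associative_general mul e₁ e₂ α β hspan h11 h12 h21 h22
end

section
/- Let (A, ·) be a nearly associative algebra and (l, r, V) a bimodule of A, i.e., linear maps l, r : A → End(V) satisfying l(x)l(y) = r(y)r(x), l(x)r(y) = l(y·x), and r(x)l(y) = r(x·y) for all x, y ∈ A. Then the product (x+u)∗(y+v) = x·y + l(x)v + r(y)u defines a nearly associative algebra structure on A ⊕ V. -/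
section

variable {R A V : Type*} [CommSemiring R] [AddCommMonoid A] [Module R A]
  [AddCommMonoid V] [Module R V]

def IsNearlyAssociative {M : Type*} (mul : M → M → M) : Prop :=
  ∀ x y z, mul x (mul y z) = mul (mul z x) y

structure IsNearlyAssociativeBimodule (mul : A →ₗ[R] A →ₗ[R] A)
    (l r : A →ₗ[R] Module.End R V) : Prop where
  left_comp_left : ∀ x y, l x ∘ₗ l y = r y ∘ₗ r x
  left_comp_right : ∀ x y, l x ∘ₗ r y = l (mul y x)
  right_comp_left : ∀ x y, r x ∘ₗ l y = r (mul x y)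

def semidirectMul (mul : A →ₗ[R] A →ₗ[R] A) (l r : A →ₗ[R] Module.End R V)
    (p q : A × V) : A × V :=
  (mul p.1 q.1, l p.1 q.2 + r q.1 p.2)

theorem IsNearlyAssociative.semidirectMul {mul : A →ₗ[R] A →ₗ[R] A}
    {l r : A →ₗ[R] Module.End R V} (hmul : IsNearlyAssociative fun x y => mul x y)
    (hbimod : IsNearlyAssociativeBimodule mul l r) :
    IsNearlyAssociative (semidirectMul mul l r) := by
  rintro ⟨x, u⟩ ⟨y, v⟩ ⟨z, w⟩
  have hll : l x (l y w) = r y (r x w) := LinearMap.congr_fun (hbimod.left_comp_left x y) w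
  have hlr : l x (r z v) = l (mul z x) v := LinearMap.congr_fun (hbimod.left_comp_right x z) v
  have hrl : r y (l z u) = r (mul y z) u := LinearMap.congr_fun (hbimod.right_comp_left y z) u
  ext
  · exact hmul x y z
  · simp only [_root_.semidirectMul, map_add, hll, hlr, ← hrl]
    abel

end

/-- The semidirect product of a nearly associative algebra with a bimodule is
a nearly associative algebra. -/
theorem bimodule_semidirect_nearly_associative
    {K A V : Type*} [Field K] [AddCommGroup A] [Module K A]
    [AddCommGroup V] [Module K V]
    (mul : A →ₗ[K] A →ₗ[K] A)
    (hna : ∀ x y z : A, mul x (mul y z) = mul (mul z x) y)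
    (l r : A →ₗ[K] Module.End K V)
    (hb1 : ∀ x y : A, l x ∘ₗ l y = r y ∘ₗ r x)
    (hb2 : ∀ x y : A, l x ∘ₗ r y = l (mul y x))
    (hb3 : ∀ x y : A, r x ∘ₗ l y = r (mul x y)) :
    ∀ X Y Z : A × V,
      (fun (p q : A × V) => ((mul p.1 q.1, l p.1 q.2 + r q.1 p.2) : A × V))
          X ((fun (p q : A × V) => ((mul p.1 q.1, l p.1 q.2 + r q.1 p.2) : A × V)) Y Z) =
      (fun (p q : A × V) => ((mul p.1 q.1, l p.1 q.2 + r q.1 p.2) : A × V))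
          ((fun (p q : A × V) => ((mul p.1 q.1, l p.1 q.2 + r q.1 p.2) : A × V)) Z X) Y :=
  IsNearlyAssociative.semidirectMul hna ⟨hb1, hb2, hb3⟩
end

section
/- Let (A, ·) be a nearly associative algebra. Then (L, R, A) is a bimodule of (A, ·), where L(x)y = x·y and R(y)x = x·y; that is, L(x)L(y) = R(y)R(x), L(x)R(y) = L(y·x), and R(x)L(y) = R(x·y) hold for all x, y ∈ A. -/
/-- (L, R, A) is a bimodule of the nearly associative algebra (A, ·). -/
theorem regular_bimodule_nearly_associative
    {K A : Type*} [Field K] [AddCommGroup A] [Module K A]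
    (mul : A →ₗ[K] A →ₗ[K] A)
    (hna : ∀ x y z : A, mul x (mul y z) = mul (mul z x) y) :
    (∀ x y : A, (mul x) ∘ₗ (mul y) = (mul.flip y) ∘ₗ (mul.flip x)) ∧
    (∀ x y : A, (mul x) ∘ₗ (mul.flip y) = mul (mul y x)) ∧
    (∀ x y : A, (mul.flip x) ∘ₗ (mul y) = mul.flip (mul x y)) :=
  ⟨fun x y => LinearMap.ext fun z => hna x y z,
    fun x y => LinearMap.ext fun z => hna x z y,
    fun x y => LinearMap.ext fun z => (hna z x y).symm⟩
end

section
/- Let (A, ·) be a nearly associative algebra and (l, r, V) a bimodule of (A, ·). Then the map x ↦ l(x) − r(x) is a representation of the underlying Lie algebra of A, i.e., (l−r)([x,y]) = (l(x)−r(x))(l(y)−r(y)) − (l(y)−r(y))(l(x)−r(x)) for all x, y ∈ A, where [x,y] = x·y − y·x. -/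
section Bimodule

variable {K A V : Type*} [CommRing K] [AddCommGroup A] [Module K A] [AddCommGroup V] [Module K V]
  {mul : A →ₗ[K] A →ₗ[K] A} {l r : A →ₗ[K] Module.End K V}

/-- The first two terms are symmetric in `x` and `y`, so they cancel in the commutator. -/
theorem sub_comp_sub_eq_of_bimodule
    (hb1 : ∀ x y : A, l x ∘ₗ l y = r y ∘ₗ r x)
    (hb2 : ∀ x y : A, l x ∘ₗ r y = l (mul y x))
    (hb3 : ∀ x y : A, r x ∘ₗ l y = r (mul x y)) (x y : A) :
    (l x - r x) ∘ₗ (l y - r y) = r y ∘ₗ r x + r x ∘ₗ r y - l (mul y x) - r (mul x y) := by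
  rw [LinearMap.sub_comp, LinearMap.comp_sub, LinearMap.comp_sub, hb1, hb2, hb3]
  abel

end Bimodule

theorem bimodule_sub_is_lie_representation_general
    {K A V : Type*} [Field K] [AddCommGroup A] [Module K A]
    [AddCommGroup V] [Module K V]
    (mul : A →ₗ[K] A →ₗ[K] A)
    (l r : A →ₗ[K] Module.End K V)
    (hb1 : ∀ x y : A, l x ∘ₗ l y = r y ∘ₗ r x)
    (hb2 : ∀ x y : A, l x ∘ₗ r y = l (mul y x))
    (hb3 : ∀ x y : A, r x ∘ₗ l y = r (mul x y)) :
    ∀ x y : A,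
      l (mul x y - mul y x) - r (mul x y - mul y x) =
        (l x - r x) ∘ₗ (l y - r y) - (l y - r y) ∘ₗ (l x - r x) := by
  intro x y
  rw [sub_comp_sub_eq_of_bimodule hb1 hb2 hb3, sub_comp_sub_eq_of_bimodule hb1 hb2 hb3,
    map_sub, map_sub]
  abel

/-- For a bimodule (l, r, V) of a nearly associative algebra, l − r is a
representation of the underlying Lie algebra. -/
theorem bimodule_sub_is_lie_representation
    {K A V : Type*} [Field K] [AddCommGroup A] [Module K A]
    [AddCommGroup V] [Module K V]
    (mul : A →ₗ[K] A →ₗ[K] A)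
    (hna : ∀ x y z : A, mul x (mul y z) = mul (mul z x) y)
    (l r : A →ₗ[K] Module.End K V)
    (hb1 : ∀ x y : A, l x ∘ₗ l y = r y ∘ₗ r x)
    (hb2 : ∀ x y : A, l x ∘ₗ r y = l (mul y x))
    (hb3 : ∀ x y : A, r x ∘ₗ l y = r (mul x y)) :
    ∀ x y : A,
      l (mul x y - mul y x) - r (mul x y - mul y x) =
        (l x - r x) ∘ₗ (l y - r y) - (l y - r y) ∘ₗ (l x - r x) :=
  bimodule_sub_is_lie_representation_general mul l r hb1 hb2 hb3
end

section
/- Let (A, ·) be a nearly associative algebra with bimodule (l, r, V), where V is finite-dimensional. If l(x)r(y) = r(y)l(x) for all x, y ∈ A, then (l*, r*, V*) is a bimodule of (A, ·), i.e., l*(x)l*(y) = r*(y)r*(x), l*(x)r*(y) = l*(y·x), and r*(y)l*(x) = r*(y·x) hold. -/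
theorem commute_implies_dual_bimodule_general
    {K A V : Type*} [Field K] [AddCommGroup A] [Module K A]
    [AddCommGroup V] [Module K V]
    (mul : A →ₗ[K] A →ₗ[K] A)
    (l r : A →ₗ[K] Module.End K V)
    (hb1 : ∀ x y : A, l x ∘ₗ l y = r y ∘ₗ r x)
    (hb2 : ∀ x y : A, l x ∘ₗ r y = l (mul y x))
    (hb3 : ∀ x y : A, r x ∘ₗ l y = r (mul x y))
    (hcomm : ∀ x y : A, l x ∘ₗ r y = r y ∘ₗ l x) :
    (∀ x y : A, (l x).dualMap ∘ₗ (l y).dualMap = (r y).dualMap ∘ₗ (r x).dualMap) ∧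
    (∀ x y : A, (l x).dualMap ∘ₗ (r y).dualMap = (l (mul y x)).dualMap) ∧
    (∀ x y : A, (r y).dualMap ∘ₗ (l x).dualMap = (r (mul y x)).dualMap) := by
  -- Dualizing reverses composition; in the last two identities `hcomm` swaps the factors back.
  refine ⟨fun x y => ?_, fun x y => ?_, fun x y => ?_⟩
  · rw [LinearMap.dualMap_comp_dualMap, LinearMap.dualMap_comp_dualMap, hb1]
  · rw [LinearMap.dualMap_comp_dualMap, ← hcomm, hb2]
  · rw [LinearMap.dualMap_comp_dualMap, hcomm, hb3]

/-- If l(x) and r(y) commute, then (l*, r*, V*) is a bimodule of the nearly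
associative algebra (A, ·). -/
theorem commute_implies_dual_bimodule
    {K A V : Type*} [Field K] [AddCommGroup A] [Module K A]
    [AddCommGroup V] [Module K V] [FiniteDimensional K V]
    (mul : A →ₗ[K] A →ₗ[K] A)
    (hna : ∀ x y z : A, mul x (mul y z) = mul (mul z x) y)
    (l r : A →ₗ[K] Module.End K V)
    (hb1 : ∀ x y : A, l x ∘ₗ l y = r y ∘ₗ r x)
    (hb2 : ∀ x y : A, l x ∘ₗ r y = l (mul y x))
    (hb3 : ∀ x y : A, r x ∘ₗ l y = r (mul x y))
    (hcomm : ∀ x y : A, l x ∘ₗ r y = r y ∘ₗ l x) :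
    (∀ x y : A, (l x).dualMap ∘ₗ (l y).dualMap = (r y).dualMap ∘ₗ (r x).dualMap) ∧
    (∀ x y : A, (l x).dualMap ∘ₗ (r y).dualMap = (l (mul y x)).dualMap) ∧
    (∀ x y : A, (r y).dualMap ∘ₗ (l x).dualMap = (r (mul y x)).dualMap) :=
  commute_implies_dual_bimodule_general mul l r hb1 hb2 hb3 hcomm
end

section
/- Let (A, ·) and (B, ∘) be nearly associative algebras with bimodules (l_A, r_A, B) of A and (l_B, r_B, A) of B satisfying the six matched-pair compatibility conditions. Then the product (x+a)∗(y+b) = (x·y + l_B(a)y + r_B(b)x) + (a∘b + l_A(x)b + r_A(y)a) makes A ⊕ B a nearly associative algebra. -/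
/-!
Expanding both sides of `X * (Y * Z) = (Z * X) * Y`, each component is a sum of nine terms.
In the `A`-component, four pairs match by near associativity of `A` and the three bimodule
identities of `(l_B, r_B, A)`, and the remaining five terms cancel by the matched-pair
conditions (1)–(3). The `B`-component is the `A`-component of the same construction with the
roles of `A` and `B` interchanged, where conditions (4)–(6) become (1)–(3).
-/

section MatchedPair

variable {K A B : Type*} [CommSemiring K] [AddCommGroup A] [Module K A]
  [AddCommGroup B] [Module K B]

def matchedPairMul (mul : A →ₗ[K] A →ₗ[K] A) (cir : B →ₗ[K] B →ₗ[K] B)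
    (lA rA : A →ₗ[K] Module.End K B) (lB rB : B →ₗ[K] Module.End K A) (p q : A × B) : A × B :=
  (mul p.1 q.1 + lB p.2 q.1 + rB q.2 p.1, cir p.2 q.2 + lA p.1 q.2 + rA q.1 p.2)

theorem fst_matchedPairMul_nearlyAssoc (mul : A →ₗ[K] A →ₗ[K] A) (cir : B →ₗ[K] B →ₗ[K] B)
    (lA rA : A →ₗ[K] Module.End K B) (lB rB : B →ₗ[K] Module.End K A)
    (hnaA : ∀ x y z : A, mul x (mul y z) = mul (mul z x) y)
    (hbB1 : ∀ a b : B, lB a ∘ₗ lB b = rB b ∘ₗ rB a)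
    (hbB2 : ∀ a b : B, lB a ∘ₗ rB b = lB (cir b a))
    (hbB3 : ∀ a b : B, rB a ∘ₗ lB b = rB (cir a b))
    (hm1 : ∀ (x y : A) (a : B),
      rB (lA x a) y + mul y (rB a x) - mul (lB a y) x - lB (rA y a) x = 0)
    (hm2 : ∀ (x y : A) (a : B),
      rB a (mul x y) - mul y (lB a x) - rB (rA x a) y = 0)
    (hm3 : ∀ (x y : A) (a : B),
      lB a (mul x y) - mul (rB a y) x - lB (lA y a) x = 0)
    (X Y Z : A × B) :
    (matchedPairMul mul cir lA rA lB rB X (matchedPairMul mul cir lA rA lB rB Y Z)).1 =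
      (matchedPairMul mul cir lA rA lB rB (matchedPairMul mul cir lA rA lB rB Z X) Y).1 := by
  obtain ⟨x, a⟩ := X
  obtain ⟨y, b⟩ := Y
  obtain ⟨z, c⟩ := Z
  have hbB1' := LinearMap.congr_fun (hbB1 a b) z
  have hbB2' := LinearMap.congr_fun (hbB2 a c) y
  have hbB3' := LinearMap.congr_fun (hbB3 b c) x
  simp only [LinearMap.comp_apply] at hbB1' hbB2' hbB3'
  simp only [matchedPairMul, map_add, LinearMap.add_apply]
  linear_combination (norm := abel) hnaA x y z + hbB1' + hbB2' - hbB3' + hm1 y x c - hm2 z x b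
    + hm3 y z a

end MatchedPair

/-- The matched pair of two nearly associative algebras yields a nearly
associative algebra structure on A ⊕ B. -/
theorem matched_pair_nearly_associative
    {K A B : Type*} [Field K] [AddCommGroup A] [Module K A]
    [AddCommGroup B] [Module K B]
    (mul : A →ₗ[K] A →ₗ[K] A)
    (cir : B →ₗ[K] B →ₗ[K] B)
    (hnaA : ∀ x y z : A, mul x (mul y z) = mul (mul z x) y)
    (hnaB : ∀ a b c : B, cir a (cir b c) = cir (cir c a) b)
    (lA rA : A →ₗ[K] Module.End K B)
    (lB rB : B →ₗ[K] Module.End K A)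
    (hbA1 : ∀ x y : A, lA x ∘ₗ lA y = rA y ∘ₗ rA x)
    (hbA2 : ∀ x y : A, lA x ∘ₗ rA y = lA (mul y x))
    (hbA3 : ∀ x y : A, rA x ∘ₗ lA y = rA (mul x y))
    (hbB1 : ∀ a b : B, lB a ∘ₗ lB b = rB b ∘ₗ rB a)
    (hbB2 : ∀ a b : B, lB a ∘ₗ rB b = lB (cir b a))
    (hbB3 : ∀ a b : B, rB a ∘ₗ lB b = rB (cir a b))
    (hm1 : ∀ (x y : A) (a : B),
      rB (lA x a) y + mul y (rB a x) - mul (lB a y) x - lB (rA y a) x = 0)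
    (hm2 : ∀ (x y : A) (a : B),
      rB a (mul x y) - mul y (lB a x) - rB (rA x a) y = 0)
    (hm3 : ∀ (x y : A) (a : B),
      lB a (mul x y) - mul (rB a y) x - lB (lA y a) x = 0)
    (hm4 : ∀ (x : A) (a b : B),
      rA (lB a x) b + cir b (rA x a) - cir (lA x b) a - lA (rB b x) a = 0)
    (hm5 : ∀ (x : A) (a b : B),
      rA x (cir a b) - cir b (lA x a) - rA (rB a x) b = 0)
    (hm6 : ∀ (x : A) (a b : B),
      lA x (cir a b) - cir (rA x b) a - lA (lB b x) a = 0) :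
    let star : A × B → A × B → A × B := fun p q =>
      (mul p.1 q.1 + lB p.2 q.1 + rB q.2 p.1,
       cir p.2 q.2 + lA p.1 q.2 + rA q.1 p.2)
    ∀ X Y Z : A × B, star X (star Y Z) = star (star Z X) Y := by
  intro star X Y Z
  have hfst := fst_matchedPairMul_nearlyAssoc mul cir lA rA lB rB hnaA hbB1 hbB2 hbB3 hm1 hm2 hm3
  have hsnd := fst_matchedPairMul_nearlyAssoc cir mul lB rB lA rA hnaB hbA1 hbA2 hbA3
    (fun a b x => hm4 x a b) (fun a b x => hm5 x a b) (fun a b x => hm6 x a b)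
  exact Prod.ext (hfst X Y Z) (hsnd X.swap Y.swap Z.swap)
end

section
/- Every nearly Hom-associative algebra is Hom-Lie admissible: if (A, ∗, α) satisfies α(x)∗(y∗z) = (z∗x)∗α(y) for all x, y, z, then the commutator [x,y] = x∗y − y∗x is skew-symmetric and satisfies the Hom-Jacobi identity [α(x),[y,z]] + [α(y),[z,x]] + [α(z),[x,y]] = 0, so (A, [·,·], α) is a Hom-Lie algebra. -/
/-!
Nearly Hom-associativity turns each `α(x) ∗ (y ∗ z)` into `(z ∗ x) ∗ α(y)`, so the cyclic sum of
`α(x) ∗ (y ∗ z)` equals the cyclic sum of `(y ∗ z) ∗ α(x)`. The Hom-Jacobiator of the commutator is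
the difference of this identity and the same identity with `y` and `z` swapped.
-/

theorem nearly_hom_associative_cyclic_sum {R A : Type*} [CommSemiring R] [AddCommMonoid A]
    [Module R A] (mul : A →ₗ[R] A →ₗ[R] A) (α : A →ₗ[R] A)
    (hna : ∀ x y z : A, mul (α x) (mul y z) = mul (mul z x) (α y)) (x y z : A) :
    mul (α x) (mul y z) + mul (α y) (mul z x) + mul (α z) (mul x y) =
      mul (mul y z) (α x) + mul (mul z x) (α y) + mul (mul x y) (α z) := by
  rw [hna x, hna y, hna z]
  abel

/-- Every nearly Hom-associative algebra is Hom-Lie admissible. -/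
theorem nearly_hom_associative_hom_lie_admissible
    {K A : Type*} [Field K] [AddCommGroup A] [Module K A]
    (mul : A →ₗ[K] A →ₗ[K] A) (α : A →ₗ[K] A)
    (hna : ∀ x y z : A, mul (α x) (mul y z) = mul (mul z x) (α y)) :
    (∀ x y : A, mul x y - mul y x = -(mul y x - mul x y)) ∧
    (∀ x y z : A,
      (mul (α x) (mul y z - mul z y) - mul (mul y z - mul z y) (α x)) +
      (mul (α y) (mul z x - mul x z) - mul (mul z x - mul x z) (α y)) +
      (mul (α z) (mul x y - mul y x) - mul (mul x y - mul y x) (α z)) = 0) := by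
  refine ⟨fun x y => (neg_sub _ _).symm, fun x y z => ?_⟩
  have cyclic := nearly_hom_associative_cyclic_sum mul α hna x y z
  have cyclic_swapped := nearly_hom_associative_cyclic_sum mul α hna x z y
  simp only [map_sub, LinearMap.sub_apply]
  linear_combination (norm := abel) cyclic - cyclic_swapped
end

section
/- Let (A, ·, α) be a nearly Hom-associative algebra and (l, r, V, φ) a bimodule. Then the map x ↦ l(x) − r(x) is a representation of the underlying Hom-Lie algebra (A, [·,·], α) with respect to φ: it satisfies (l−r)(α(x))∘φ = φ∘(l−r)(x) and (l−r)([x,y])∘φ = (l−r)(α(x))∘(l−r)(y) − (l−r)(α(y))∘(l−r)(x) for all x, y ∈ A, where [x,y] = x·y − y·x. -/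
/-!
Expanding `(l - r)([x, y]) ∘ φ` gives the four terms `l(x·y)φ, l(y·x)φ, r(x·y)φ, r(y·x)φ`, which
the mixed bimodule axioms turn into the mixed products `l(α y) r(x), l(α x) r(y), r(α x) l(y),
r(α y) l(x)`. Expanding the right-hand side produces the same mixed products together with
`l(α x) l(y) - l(α y) l(x) + r(α x) r(y) - r(α y) r(x)`, which vanishes by `l(α x) l(y) = r(α y) r(x)`.
-/

open LinearMap

section HomBimodule

variable {K A V : Type*} [CommSemiring K] [AddCommGroup A] [Module K A]
  [AddCommGroup V] [Module K V]

theorem bimodule_sub_comp_comm (α : A →ₗ[K] A) (l r : A →ₗ[K] Module.End K V)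
    (φ : Module.End K V) (hl : ∀ x : A, φ ∘ₗ l x = l (α x) ∘ₗ φ)
    (hr : ∀ x : A, φ ∘ₗ r x = r (α x) ∘ₗ φ) (x : A) :
    (l (α x) - r (α x)) ∘ₗ φ = φ ∘ₗ (l x - r x) := by
  rw [sub_comp, comp_sub, hl, hr]

theorem bimodule_sub_commutator_comp (mul : A →ₗ[K] A →ₗ[K] A) (α : A →ₗ[K] A)
    (l r : A →ₗ[K] Module.End K V) (φ : Module.End K V)
    (hll : ∀ x y : A, l (α x) ∘ₗ l y = r (α y) ∘ₗ r x)
    (hlr : ∀ x y : A, l (α x) ∘ₗ r y = l (mul y x) ∘ₗ φ)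
    (hrl : ∀ x y : A, r (α x) ∘ₗ l y = r (mul x y) ∘ₗ φ) (x y : A) :
    (l (mul x y - mul y x) - r (mul x y - mul y x)) ∘ₗ φ =
      (l (α x) - r (α x)) ∘ₗ (l y - r y) - (l (α y) - r (α y)) ∘ₗ (l x - r x) := by
  simp only [map_sub, sub_comp, comp_sub, ← hlr, ← hrl, hll x y, hll y x]
  abel

end HomBimodule

theorem hom_bimodule_sub_is_hom_lie_representation_general
    {K A V : Type*} [Field K] [AddCommGroup A] [Module K A]
    [AddCommGroup V] [Module K V]
    (mul : A →ₗ[K] A →ₗ[K] A) (α : A →ₗ[K] A)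
    (l r : A →ₗ[K] Module.End K V) (φ : Module.End K V)
    (hb0l : ∀ x : A, φ ∘ₗ l x = l (α x) ∘ₗ φ)
    (hb0r : ∀ x : A, φ ∘ₗ r x = r (α x) ∘ₗ φ)
    (hb1 : ∀ x y : A, l (α x) ∘ₗ l y = r (α y) ∘ₗ r x)
    (hb2 : ∀ x y : A, l (α x) ∘ₗ r y = l (mul y x) ∘ₗ φ)
    (hb3 : ∀ x y : A, r (α x) ∘ₗ l y = r (mul x y) ∘ₗ φ) :
    (∀ x : A, (l (α x) - r (α x)) ∘ₗ φ = φ ∘ₗ (l x - r x)) ∧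
    (∀ x y : A,
      (l (mul x y - mul y x) - r (mul x y - mul y x)) ∘ₗ φ =
        (l (α x) - r (α x)) ∘ₗ (l y - r y) - (l (α y) - r (α y)) ∘ₗ (l x - r x)) :=
  ⟨bimodule_sub_comp_comm α l r φ hb0l hb0r,
    bimodule_sub_commutator_comp mul α l r φ hb1 hb2 hb3⟩

/-- For a bimodule (l, r, V, φ) of a nearly Hom-associative algebra, l − r is a
representation of the underlying Hom-Lie algebra with respect to φ. -/
theorem hom_bimodule_sub_is_hom_lie_representation
    {K A V : Type*} [Field K] [AddCommGroup A] [Module K A]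
    [AddCommGroup V] [Module K V]
    (mul : A →ₗ[K] A →ₗ[K] A) (α : A →ₗ[K] A)
    (hna : ∀ x y z : A, mul (α x) (mul y z) = mul (mul z x) (α y))
    (l r : A →ₗ[K] Module.End K V) (φ : Module.End K V)
    (hb0l : ∀ x : A, φ ∘ₗ l x = l (α x) ∘ₗ φ)
    (hb0r : ∀ x : A, φ ∘ₗ r x = r (α x) ∘ₗ φ)
    (hb1 : ∀ x y : A, l (α x) ∘ₗ l y = r (α y) ∘ₗ r x)
    (hb2 : ∀ x y : A, l (α x) ∘ₗ r y = l (mul y x) ∘ₗ φ)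
    (hb3 : ∀ x y : A, r (α x) ∘ₗ l y = r (mul x y) ∘ₗ φ) :
    (∀ x : A, (l (α x) - r (α x)) ∘ₗ φ = φ ∘ₗ (l x - r x)) ∧
    (∀ x y : A,
      (l (mul x y - mul y x) - r (mul x y - mul y x)) ∘ₗ φ =
        (l (α x) - r (α x)) ∘ₗ (l y - r y) - (l (α y) - r (α y)) ∘ₗ (l x - r x)) :=
  hom_bimodule_sub_is_hom_lie_representation_general mul α l r φ hb0l hb0r hb1 hb2 hb3
end

section
/- Let (A, ∗, α) be a nearly Hom-associative algebra and (l, r, V, φ) a bimodule of A. Then the product (x+u)⋆(y+v) = x∗y + l(x)v + r(y)u together with the map α⊕φ defines a nearly Hom-associative algebra structure on A ⊕ V, i.e., (α⊕φ)(X)⋆(Y⋆Z) = (Z⋆X)⋆(α⊕φ)(Y) for all X, Y, Z ∈ A ⊕ V. -/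
theorem hom_bimodule_semidirect_nearly_hom_associative_general
    {K A V : Type*} [Field K] [AddCommGroup A] [Module K A]
    [AddCommGroup V] [Module K V]
    (mul : A →ₗ[K] A →ₗ[K] A) (α : A →ₗ[K] A)
    (hna : ∀ x y z : A, mul (α x) (mul y z) = mul (mul z x) (α y))
    (l r : A →ₗ[K] Module.End K V) (φ : Module.End K V)
    (hb1 : ∀ x y : A, l (α x) ∘ₗ l y = r (α y) ∘ₗ r x)
    (hb2 : ∀ x y : A, l (α x) ∘ₗ r y = l (mul y x) ∘ₗ φ)
    (hb3 : ∀ x y : A, r (α x) ∘ₗ l y = r (mul x y) ∘ₗ φ) :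
    let star : A × V → A × V → A × V := fun p q =>
      (mul p.1 q.1, l p.1 q.2 + r q.1 p.2)
    let αφ : A × V → A × V := fun p => (α p.1, φ p.2)
    ∀ X Y Z : A × V, star (αφ X) (star Y Z) = star (star Z X) (αφ Y) := by
  intro star αφ ⟨x, u⟩ ⟨y, v⟩ ⟨z, w⟩
  refine Prod.ext (hna x y z) ?_
  -- Each of the three terms of the `V`-component is carried to its counterpart by one axiom.
  have hw := LinearMap.congr_fun (hb1 x y) w
  have hv := LinearMap.congr_fun (hb2 x z) v
  have hu := LinearMap.congr_fun (hb3 y z) u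
  simp only [LinearMap.comp_apply] at hw hv hu
  simp only [star, αφ, map_add, hw, hv, hu]
  abel

/-- The semidirect product of a nearly Hom-associative algebra with a bimodule
(l, r, V, φ) is a nearly Hom-associative algebra for α ⊕ φ. -/
theorem hom_bimodule_semidirect_nearly_hom_associative
    {K A V : Type*} [Field K] [AddCommGroup A] [Module K A]
    [AddCommGroup V] [Module K V]
    (mul : A →ₗ[K] A →ₗ[K] A) (α : A →ₗ[K] A)
    (hna : ∀ x y z : A, mul (α x) (mul y z) = mul (mul z x) (α y))
    (l r : A →ₗ[K] Module.End K V) (φ : Module.End K V)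
    (hb0l : ∀ x : A, φ ∘ₗ l x = l (α x) ∘ₗ φ)
    (hb0r : ∀ x : A, φ ∘ₗ r x = r (α x) ∘ₗ φ)
    (hb1 : ∀ x y : A, l (α x) ∘ₗ l y = r (α y) ∘ₗ r x)
    (hb2 : ∀ x y : A, l (α x) ∘ₗ r y = l (mul y x) ∘ₗ φ)
    (hb3 : ∀ x y : A, r (α x) ∘ₗ l y = r (mul x y) ∘ₗ φ) :
    let star : A × V → A × V → A × V := fun p q =>
      (mul p.1 q.1, l p.1 q.2 + r q.1 p.2)
    let αφ : A × V → A × V := fun p => (α p.1, φ p.2)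
    ∀ X Y Z : A × V, star (αφ X) (star Y Z) = star (star Z X) (αφ Y) :=
  hom_bimodule_semidirect_nearly_hom_associative_general mul α hna l r φ hb1 hb2 hb3
end
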